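/- arXiv:1810.00152 — 5 statements merged into one kernel-verified Lean document; each statement's English description precedes it below -/
import Mathlib

section
/- Let A, B be symmetric positive-definite n×n matrices with μ₀I ≤ A, B ≤ μ₁I, let θ ∈ [0,1] and H a symmetric positive semidefinite matrix with trace 1. Then the matrix I + θ·B^{-1/2}HB^{-1/2}(A−B) is nonsingular; in fact det(I + θB^{-1/2}HB^{-1/2}(A−B)) ≥ ((θμ₀+(1−θ)μ₁)/μ₁)^n > 0. -/
/-!
Write `H = Lᵀ L` and `K = L B^{-1/2}`. By the Weinstein–Aronszajn identity
`det (1 + X Y) = det (1 + Y X)` the determinant equals `det (1 + θ K (A - B) Kᵀ)`, and with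
`t = (θ μ₀ + (1 - θ) μ₁) / μ₁` the symmetric matrix `1 + θ K (A - B) Kᵀ - t` splits as
`θ K (A - μ₀) Kᵀ + (θ μ₀ / μ₁) K (μ₁ - B) Kᵀ + (θ (μ₁ - μ₀) / μ₁) (1 - L Lᵀ)`.
All three terms are positive semidefinite, the last one because `K B Kᵀ = L Lᵀ` is positive
semidefinite with trace `tr H = 1`, which bounds its eigenvalues. Hence all eigenvalues of
`1 + θ K (A - B) Kᵀ` are at least `t`.
-/

open Matrix

namespace Matrix

open MatrixOrder

variable {ι m : Type*} [Fintype ι] [Fintype m] [DecidableEq ι] [DecidableEq m]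

theorem IsHermitian.le_eigenvalues_of_posSemidef_sub {M : Matrix ι ι ℝ} (hM : M.IsHermitian)
    {t : ℝ} (h : (M - t • (1 : Matrix ι ι ℝ)).PosSemidef) (i : ι) : t ≤ hM.eigenvalues i := by
  have hle : algebraMap ℝ (Matrix ι ι ℝ) t ≤ M := by
    rwa [Algebra.algebraMap_eq_smul_one]
  rw [algebraMap_le_iff_le_spectrum hM.isSelfAdjoint] at hle
  exact hle _ (hM.spectrum_real_eq_range_eigenvalues ▸ Set.mem_range_self i)

theorem pow_card_le_det_of_posSemidef_sub {M : Matrix ι ι ℝ} {t : ℝ} (ht : 0 ≤ t)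
    (h : (M - t • (1 : Matrix ι ι ℝ)).PosSemidef) : t ^ Fintype.card ι ≤ M.det := by
  have hM : M.IsHermitian := by
    simpa using h.isHermitian.add (isHermitian_one.smul (IsSelfAdjoint.all t))
  rw [hM.det_eq_prod_eigenvalues, ← Finset.card_univ, ← Finset.prod_const]
  exact Finset.prod_le_prod (fun _ _ => ht) fun i _ => by
    simpa using hM.le_eigenvalues_of_posSemidef_sub h i

theorem PosSemidef.eigenvalues_le_trace {H : Matrix ι ι ℝ} (hH : H.PosSemidef) (i : ι) :
    hH.1.eigenvalues i ≤ H.trace := by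
  rw [hH.1.trace_eq_sum_eigenvalues]
  simpa using Finset.single_le_sum (fun j _ => hH.eigenvalues_nonneg j) (Finset.mem_univ i)

theorem PosSemidef.trace_smul_one_sub {H : Matrix ι ι ℝ} (hH : H.PosSemidef) :
    (H.trace • (1 : Matrix ι ι ℝ) - H).PosSemidef := by
  have : H ≤ algebraMap ℝ (Matrix ι ι ℝ) H.trace := by
    rw [le_algebraMap_iff_spectrum_le hH.1.isSelfAdjoint, hH.1.spectrum_real_eq_range_eigenvalues]
    rintro _ ⟨i, rfl⟩
    exact hH.eigenvalues_le_trace i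
  rwa [Algebra.algebraMap_eq_smul_one] at this

theorem det_one_add_smul_conjTranspose_mul_mul {R : Type*} [CommRing R] [StarRing R]
    (K : Matrix m ι R) (M : Matrix ι ι R) (θ : R) :
    det (1 + θ • (Kᴴ * K * M)) = det (1 + θ • (K * M * Kᴴ)) := by
  rw [Matrix.mul_assoc, ← Matrix.smul_mul, det_one_add_mul_comm, Matrix.mul_smul]

theorem posSemidef_one_add_smul_mul_sub_mul_conjTranspose_sub_smul_one
    {μ₀ μ₁ θ : ℝ} (hμ₀ : 0 ≤ μ₀) (hμ₁ : 0 < μ₁) (hμ : μ₀ ≤ μ₁) (hθ : 0 ≤ θ)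
    {A B : Matrix ι ι ℝ} {K : Matrix m ι ℝ}
    (hA : (A - μ₀ • (1 : Matrix ι ι ℝ)).PosSemidef)
    (hB : (μ₁ • (1 : Matrix ι ι ℝ) - B).PosSemidef) (hK : (1 - K * B * Kᴴ).PosSemidef) :
    (1 + θ • (K * (A - B) * Kᴴ) -
      ((θ * μ₀ + (1 - θ) * μ₁) / μ₁) • (1 : Matrix m m ℝ)).PosSemidef := by
  have hsplit :
      1 + θ • (K * (A - B) * Kᴴ) - ((θ * μ₀ + (1 - θ) * μ₁) / μ₁) • (1 : Matrix m m ℝ) =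
        θ • (K * (A - μ₀ • 1) * Kᴴ) + (θ * μ₀ / μ₁) • (K * (μ₁ • 1 - B) * Kᴴ)
          + (θ * (μ₁ - μ₀) / μ₁) • (1 - K * B * Kᴴ) := by
    simp only [Matrix.mul_sub, Matrix.sub_mul, Matrix.mul_smul, Matrix.smul_mul, Matrix.mul_one]
    match_scalars <;> field_simp <;> ring
  rw [hsplit]
  refine ((hA.mul_mul_conjTranspose_same K).smul hθ).add
    ((hB.mul_mul_conjTranspose_same K).smul (by positivity)) |>.add (hK.smul ?_)
  exact div_nonneg (mul_nonneg hθ (sub_nonneg.2 hμ)) hμ₁.le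

end Matrix

theorem det_lamination_matrix_pos_general {n : ℕ} (μ₀ μ₁ : ℝ) (hμ₀ : 0 < μ₀) (hμ : μ₀ ≤ μ₁)
    (A B H Bsq : Matrix (Fin n) (Fin n) ℝ)
    (hAl : (A - μ₀ • (1 : Matrix (Fin n) (Fin n) ℝ)).PosSemidef)
    (hBu : (μ₁ • (1 : Matrix (Fin n) (Fin n) ℝ) - B).PosSemidef)
    (hBsq : Bsq.PosDef) (hBsqB : Bsq * Bsq = B)
    (θ : ℝ) (hθ : θ ∈ Set.Icc (0:ℝ) 1)
    (hH : H.PosSemidef) (htr : H.trace = 1) :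
    0 < ((θ * μ₀ + (1 - θ) * μ₁) / μ₁) ^ n ∧
    ((θ * μ₀ + (1 - θ) * μ₁) / μ₁) ^ n ≤
      ((1 : Matrix (Fin n) (Fin n) ℝ) + θ • (Bsq⁻¹ * H * Bsq⁻¹ * (A - B))).det ∧
    IsUnit ((1 : Matrix (Fin n) (Fin n) ℝ) + θ • (Bsq⁻¹ * H * Bsq⁻¹ * (A - B))) := by
  obtain ⟨hθ₀, hθ₁⟩ := hθ
  have hμ₁ : 0 < μ₁ := hμ₀.trans_le hμ
  have ht : 0 < (θ * μ₀ + (1 - θ) * μ₁) / μ₁ := by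
    apply div_pos _ hμ₁
    nlinarith
  obtain ⟨L, rfl⟩ : ∃ L, H = star L * L := by
    open MatrixOrder in exact CStarAlgebra.nonneg_iff_eq_star_mul_self.mp hH.nonneg
  set K := L * Bsq⁻¹
  have hBsq_inv_herm : Bsq⁻¹ᴴ = Bsq⁻¹ := hBsq.isHermitian.inv.eq
  have hKK : Bsq⁻¹ * (star L * L) * Bsq⁻¹ = Kᴴ * K := by
    simp only [K, conjTranspose_mul, hBsq_inv_herm, star_eq_conjTranspose, Matrix.mul_assoc]
  have hKBK : K * B * Kᴴ = L * Lᴴ := by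
    have hBsq_unit : IsUnit Bsq.det := hBsq.det_pos.ne'.isUnit
    simp only [K, conjTranspose_mul, hBsq_inv_herm, ← hBsqB, Matrix.mul_assoc,
      mul_nonsing_inv_cancel_left _ _ hBsq_unit, nonsing_inv_mul_cancel_left _ _ hBsq_unit]
  have hLL : (1 - L * Lᴴ).PosSemidef := by
    have htr' : (L * Lᴴ).trace = 1 := by rwa [trace_mul_comm, ← star_eq_conjTranspose]
    simpa only [htr', one_smul] using (posSemidef_self_mul_conjTranspose L).trace_smul_one_sub
  have hbound := pow_card_le_det_of_posSemidef_sub ht.le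
    (posSemidef_one_add_smul_mul_sub_mul_conjTranspose_sub_smul_one hμ₀.le hμ₁ hμ hθ₀ hAl hBu
      (hKBK ▸ hLL))
  rw [Fintype.card_fin, ← det_one_add_smul_conjTranspose_mul_mul, ← hKK] at hbound
  exact ⟨pow_pos ht n, hbound,
    (isUnit_iff_isUnit_det _).2 ((pow_pos ht n).trans_le hbound).ne'.isUnit⟩

/-- For `μ₀ I ≤ A, B ≤ μ₁ I`, `θ ∈ [0,1]` and `H ⪰ 0` with `tr(H) = 1`, the matrix
`I + θ B^{-1/2} H B^{-1/2}(A−B)` is nonsingular; in fact its determinant is at least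
`((θμ₀+(1−θ)μ₁)/μ₁)^n > 0`. (Here `Bsq` denotes the positive square root `B^{1/2}`.) -/
theorem det_lamination_matrix_pos {n : ℕ} (μ₀ μ₁ : ℝ) (hμ₀ : 0 < μ₀) (hμ : μ₀ ≤ μ₁)
    (A B H Bsq : Matrix (Fin n) (Fin n) ℝ)
    (hA : A.IsSymm) (hB : B.IsSymm)
    (hAl : (A - μ₀ • (1 : Matrix (Fin n) (Fin n) ℝ)).PosSemidef)
    (hAu : (μ₁ • (1 : Matrix (Fin n) (Fin n) ℝ) - A).PosSemidef)
    (hBl : (B - μ₀ • (1 : Matrix (Fin n) (Fin n) ℝ)).PosSemidef)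
    (hBu : (μ₁ • (1 : Matrix (Fin n) (Fin n) ℝ) - B).PosSemidef)
    (hBsq : Bsq.PosDef) (hBsqB : Bsq * Bsq = B)
    (θ : ℝ) (hθ : θ ∈ Set.Icc (0:ℝ) 1)
    (hH : H.PosSemidef) (htr : H.trace = 1) :
    0 < ((θ * μ₀ + (1 - θ) * μ₁) / μ₁) ^ n ∧
    ((θ * μ₀ + (1 - θ) * μ₁) / μ₁) ^ n ≤
      ((1 : Matrix (Fin n) (Fin n) ℝ) + θ • (Bsq⁻¹ * H * Bsq⁻¹ * (A - B))).det ∧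
    IsUnit ((1 : Matrix (Fin n) (Fin n) ℝ) + θ • (Bsq⁻¹ * H * Bsq⁻¹ * (A - B))) :=
  det_lamination_matrix_pos_general μ₀ μ₁ hμ₀ hμ A B H Bsq hAl hBu hBsq hBsqB θ hθ hH htr
end

section
/- Let A, B be symmetric positive-definite matrices, θ ∈ [0,1], and e a unit vector. Then the lamination formula H[A,B;θ,e] = (1−θ)A + θB − θ(1−θ)(A−B)ee^T(A−B) / (e^T(θA+(1−θ)B)e) defines a symmetric matrix satisfying the bounds ((1−θ)A^{-1} + θB^{-1})^{-1} ≤ H[A,B;θ,e] ≤ (1−θ)A + θB. In particular, if μ₀I ≤ A, B ≤ μ₁I then μ₀I ≤ H[A,B;θ,e] ≤ μ₁I. -/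
/-!
With `u = (A - B) e` and `d = eᵀ (θ A + (1 - θ) B) e ≥ 0`, the lamination is
`(1 - θ) A + θ B - θ (1 - θ) / d • u uᵀ`, which gives symmetry and the upper bound
`H ≤ (1 - θ) A + θ B ≤ μ₁ I` at once.

For the lower bounds, split `x = (1 - θ) a + θ b` with `a = x + θ t e`, `b = x - (1 - θ) t e`.
Then `(1 - θ) aᵀ A a + θ bᵀ B b` is a quadratic in `t` whose minimum, at `t = -eᵀ (A - B) x / d`,
is exactly `xᵀ H x`. Any lower bound on `(1 - θ) aᵀ A a + θ bᵀ B b` valid for all such splittings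
therefore bounds `H`: adding the Fenchel–Young inequalities `2 aᵀ y - yᵀ A⁻¹ y ≤ aᵀ A a` and
`2 bᵀ y - yᵀ B⁻¹ y ≤ bᵀ B b` at `y = ((1 - θ) A⁻¹ + θ B⁻¹)⁻¹ x` gives the harmonic-mean bound, and
convexity of `x ↦ xᵀ M x` for `M ≤ A, B` gives `M ≤ H`, in particular `μ₀ I ≤ H`.
-/

open Matrix

/-- The lamination formula `H[A,B;θ,e]`. -/
noncomputable def lamination {n : ℕ} (A B : Matrix (Fin n) (Fin n) ℝ) (θ : ℝ)
    (e : Fin n → ℝ) : Matrix (Fin n) (Fin n) ℝ :=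
  (1 - θ) • A + θ • B -
    (θ * (1 - θ) / (((θ • A + (1 - θ) • B).mulVec e) ⬝ᵥ e)) •
      ((A - B) * vecMulVec e e * (A - B))

namespace Matrix

variable {ι : Type*} {M : Matrix ι ι ℝ}

theorem PosDef.one_sub_smul_add_smul {N : Matrix ι ι ℝ} (hM : M.PosDef) (hN : N.PosDef) {θ : ℝ}
    (hθ : θ ∈ Set.Icc (0 : ℝ) 1) : ((1 - θ) • M + θ • N).PosDef := by
  rcases hθ.2.lt_or_eq with hθ1 | rfl
  · exact (hM.smul (sub_pos.mpr hθ1)).add_posSemidef (hN.posSemidef.smul hθ.1)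
  · simpa using hN

variable [Fintype ι]

theorem IsHermitian.dotProduct_mulVec_comm (hM : M.IsHermitian) (v w : ι → ℝ) :
    v ⬝ᵥ M *ᵥ w = w ⬝ᵥ M *ᵥ v := by
  rw [dotProduct_mulVec, ← mulVec_transpose, (isHermitian_iff_isSymm.mp hM).eq, dotProduct_comm]

theorem IsHermitian.dotProduct_mulVec_add_smul (hM : M.IsHermitian) (x e : ι → ℝ) (s : ℝ) :
    (x + s • e) ⬝ᵥ M *ᵥ (x + s • e) =
      x ⬝ᵥ M *ᵥ x + 2 * s * (e ⬝ᵥ M *ᵥ x) + s ^ 2 * (e ⬝ᵥ M *ᵥ e) := by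
  simp only [mulVec_add, mulVec_smul, dotProduct_add, add_dotProduct, dotProduct_smul,
    smul_dotProduct, smul_eq_mul, hM.dotProduct_mulVec_comm x e]
  ring

theorem PosSemidef.dotProduct_mulVec_convexComb_le (hM : M.PosSemidef) {θ : ℝ}
    (hθ : θ ∈ Set.Icc (0 : ℝ) 1) (a b : ι → ℝ) :
    ((1 - θ) • a + θ • b) ⬝ᵥ M *ᵥ ((1 - θ) • a + θ • b) ≤
      (1 - θ) * (a ⬝ᵥ M *ᵥ a) + θ * (b ⬝ᵥ M *ᵥ b) := by
  have hab : 0 ≤ (a - b) ⬝ᵥ M *ᵥ (a - b) := by simpa using hM.dotProduct_mulVec_nonneg (a - b)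
  simp only [mulVec_add, mulVec_sub, mulVec_smul, dotProduct_add, dotProduct_sub, add_dotProduct,
    sub_dotProduct, dotProduct_smul, smul_dotProduct, smul_eq_mul,
    hM.isHermitian.dotProduct_mulVec_comm b a] at hab ⊢
  nlinarith [mul_nonneg (mul_nonneg hθ.1 (sub_nonneg.mpr hθ.2)) hab]

theorem PosDef.two_mul_dotProduct_sub_le [DecidableEq ι] (hM : M.PosDef) (a y : ι → ℝ) :
    2 * (a ⬝ᵥ y) - y ⬝ᵥ M⁻¹ *ᵥ y ≤ a ⬝ᵥ M *ᵥ a := by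
  set w := M⁻¹ *ᵥ y
  have hw : M *ᵥ w = y := by
    rw [mulVec_mulVec, mul_nonsing_inv _ (isUnit_iff_isUnit_det _ |>.mp hM.isUnit), one_mulVec]
  have hnonneg : 0 ≤ (a + (-1 : ℝ) • w) ⬝ᵥ M *ᵥ (a + (-1 : ℝ) • w) := by
    simpa using hM.posSemidef.dotProduct_mulVec_nonneg (a + (-1 : ℝ) • w)
  rw [hM.isHermitian.dotProduct_mulVec_add_smul, hM.isHermitian.dotProduct_mulVec_comm w a, hw,
    dotProduct_comm w y] at hnonneg
  linarith

theorem PosDef.dotProduct_harmonicMean_mulVec_le [DecidableEq ι] {N : Matrix ι ι ℝ}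
    (hM : M.PosDef) (hN : N.PosDef) {θ : ℝ} (hθ : θ ∈ Set.Icc (0 : ℝ) 1) (a b : ι → ℝ) :
    ((1 - θ) • a + θ • b) ⬝ᵥ ((1 - θ) • M⁻¹ + θ • N⁻¹)⁻¹ *ᵥ ((1 - θ) • a + θ • b) ≤
      (1 - θ) * (a ⬝ᵥ M *ᵥ a) + θ * (b ⬝ᵥ N *ᵥ b) := by
  set S := (1 - θ) • M⁻¹ + θ • N⁻¹
  set x := (1 - θ) • a + θ • b
  set y := S⁻¹ *ᵥ x
  have hS : S.PosDef := hM.inv.one_sub_smul_add_smul hN.inv hθ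
  have hSy : S *ᵥ y = x := by
    rw [mulVec_mulVec, mul_nonsing_inv _ (isUnit_iff_isUnit_det _ |>.mp hS.isUnit), one_mulVec]
  have hxy : x ⬝ᵥ y = (1 - θ) * (a ⬝ᵥ y) + θ * (b ⬝ᵥ y) := by
    simp only [x, add_dotProduct, smul_dotProduct, smul_eq_mul]
  have hyy : x ⬝ᵥ y = (1 - θ) * (y ⬝ᵥ M⁻¹ *ᵥ y) + θ * (y ⬝ᵥ N⁻¹ *ᵥ y) := by
    rw [← hSy, dotProduct_comm]
    simp only [S, add_mulVec, smul_mulVec, dotProduct_add, dotProduct_smul, smul_eq_mul]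
  have hMa := hM.two_mul_dotProduct_sub_le a y
  have hNb := hN.two_mul_dotProduct_sub_le b y
  linarith [mul_le_mul_of_nonneg_left hMa (sub_nonneg.mpr hθ.2),
    mul_le_mul_of_nonneg_left hNb hθ.1]

end Matrix

section Lamination

variable {n : ℕ} {A B : Matrix (Fin n) (Fin n) ℝ} {θ : ℝ} {e : Fin n → ℝ}

theorem lamination_eq_sub_smul_vecMulVec (hA : A.IsHermitian) (hB : B.IsHermitian) :
    lamination A B θ e = (1 - θ) • A + θ • B -
      (θ * (1 - θ) / ((θ • A + (1 - θ) • B) *ᵥ e ⬝ᵥ e)) •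
        vecMulVec ((A - B) *ᵥ e) ((A - B) *ᵥ e) := by
  rw [lamination, mul_vecMulVec, vecMulVec_mul, ← mulVec_transpose,
    (isHermitian_iff_isSymm.mp (hA.sub hB)).eq]

theorem isHermitian_lamination (hA : A.IsHermitian) (hB : B.IsHermitian) :
    (lamination A B θ e).IsHermitian := by
  rw [lamination_eq_sub_smul_vecMulVec hA hB]
  exact ((hA.smul (.all _)).add (hB.smul (.all _))).sub
    ((posSemidef_vecMulVec_self_star ((A - B) *ᵥ e)).isHermitian.smul (.all _))

theorem sub_lamination_posSemidef (hA : A.PosSemidef) (hB : B.PosSemidef)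
    (hθ : θ ∈ Set.Icc (0 : ℝ) 1) : ((1 - θ) • A + θ • B - lamination A B θ e).PosSemidef := by
  have hd : 0 ≤ (θ • A + (1 - θ) • B) *ᵥ e ⬝ᵥ e := by
    rw [dotProduct_comm]
    simpa using ((hA.smul hθ.1).add (hB.smul (sub_nonneg.mpr hθ.2))).dotProduct_mulVec_nonneg e
  rw [lamination_eq_sub_smul_vecMulVec hA.isHermitian hB.isHermitian, sub_sub_cancel]
  have hu : (vecMulVec ((A - B) *ᵥ e) ((A - B) *ᵥ e)).PosSemidef := by
    simpa using posSemidef_vecMulVec_self_star ((A - B) *ᵥ e)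
  exact hu.smul (div_nonneg (mul_nonneg hθ.1 (sub_nonneg.mpr hθ.2)) hd)

theorem dotProduct_lamination_mulVec (hA : A.IsHermitian) (hB : B.IsHermitian) (x : Fin n → ℝ) :
    x ⬝ᵥ lamination A B θ e *ᵥ x = (1 - θ) * (x ⬝ᵥ A *ᵥ x) + θ * (x ⬝ᵥ B *ᵥ x) -
      θ * (1 - θ) / ((θ • A + (1 - θ) • B) *ᵥ e ⬝ᵥ e) * (e ⬝ᵥ (A - B) *ᵥ x) ^ 2 := by
  have hux : (A - B) *ᵥ e ⬝ᵥ x = e ⬝ᵥ (A - B) *ᵥ x := by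
    rw [dotProduct_comm, (hA.sub hB).dotProduct_mulVec_comm]
  rw [lamination_eq_sub_smul_vecMulVec hA hB, sub_mulVec, smul_mulVec, vecMulVec_mulVec, op_smul_eq_smul, dotProduct_sub, dotProduct_smul,
    dotProduct_smul, dotProduct_comm x ((A - B) *ᵥ e), hux]
  simp only [add_mulVec, smul_mulVec, dotProduct_add, dotProduct_smul, smul_eq_mul]
  ring

theorem exists_dotProduct_lamination_mulVec_eq_convexComb (hA : A.IsHermitian)
    (hB : B.IsHermitian) (x : Fin n → ℝ) :
    ∃ a b : Fin n → ℝ, (1 - θ) • a + θ • b = x ∧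
      x ⬝ᵥ lamination A B θ e *ᵥ x = (1 - θ) * (a ⬝ᵥ A *ᵥ a) + θ * (b ⬝ᵥ B *ᵥ b) := by
  set d := (θ • A + (1 - θ) • B) *ᵥ e ⬝ᵥ e with hd_def
  set g := e ⬝ᵥ (A - B) *ᵥ x with hg_def
  set t := -g / d
  refine ⟨x + (θ * t) • e, x + (-(1 - θ) * t) • e, by module, ?_⟩
  have hd : d = θ * (e ⬝ᵥ A *ᵥ e) + (1 - θ) * (e ⬝ᵥ B *ᵥ e) := by
    rw [hd_def, dotProduct_comm]
    simp only [add_mulVec, smul_mulVec, dotProduct_add, dotProduct_smul, smul_eq_mul]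
  have hg : g = e ⬝ᵥ A *ᵥ x - e ⬝ᵥ B *ᵥ x := by
    rw [hg_def, sub_mulVec, dotProduct_sub]
  -- for `d = 0` both sides vanish, since then `t = 0` and `g ^ 2 / d = 0`
  have hopt : 2 * t * g + t ^ 2 * d = -(g ^ 2 / d) := by
    rcases eq_or_ne d 0 with h | h
    · simp [t, h]
    · simp only [t]
      field_simp
      ring
  rw [dotProduct_lamination_mulVec hA hB, hA.dotProduct_mulVec_add_smul,
    hB.dotProduct_mulVec_add_smul]
  linear_combination (-θ * (1 - θ)) * hopt + 2 * θ * (1 - θ) * t * hg + θ * (1 - θ) * t ^ 2 * hd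

theorem lamination_sub_posSemidef_of_le {M : Matrix (Fin n) (Fin n) ℝ} (hM : M.PosSemidef)
    (hAM : (A - M).PosSemidef) (hBM : (B - M).PosSemidef) (hθ : θ ∈ Set.Icc (0 : ℝ) 1) :
    (lamination A B θ e - M).PosSemidef := by
  have hA : A.IsHermitian := by simpa using hAM.isHermitian.add hM.isHermitian
  have hB : B.IsHermitian := by simpa using hBM.isHermitian.add hM.isHermitian
  refine .of_dotProduct_mulVec_nonneg ((isHermitian_lamination hA hB).sub hM.isHermitian)
    fun x ↦ ?_
  obtain ⟨a, b, rfl, hx⟩ :=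
    exists_dotProduct_lamination_mulVec_eq_convexComb (θ := θ) (e := e) hA hB x
  have ha : a ⬝ᵥ M *ᵥ a ≤ a ⬝ᵥ A *ᵥ a := by
    simpa [sub_mulVec] using hAM.dotProduct_mulVec_nonneg a
  have hb : b ⬝ᵥ M *ᵥ b ≤ b ⬝ᵥ B *ᵥ b := by
    simpa [sub_mulVec] using hBM.dotProduct_mulVec_nonneg b
  rw [star_trivial, sub_mulVec, dotProduct_sub, sub_nonneg, hx]
  linarith [hM.dotProduct_mulVec_convexComb_le hθ a b, mul_le_mul_of_nonneg_left ha
    (sub_nonneg.mpr hθ.2), mul_le_mul_of_nonneg_left hb hθ.1]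

theorem lamination_sub_harmonicMean_posSemidef (hA : A.PosDef) (hB : B.PosDef)
    (hθ : θ ∈ Set.Icc (0 : ℝ) 1) :
    (lamination A B θ e - ((1 - θ) • A⁻¹ + θ • B⁻¹)⁻¹).PosSemidef := by
  have hS := (hA.inv.one_sub_smul_add_smul hB.inv hθ).inv
  refine .of_dotProduct_mulVec_nonneg
    ((isHermitian_lamination hA.isHermitian hB.isHermitian).sub hS.isHermitian) fun x ↦ ?_
  obtain ⟨a, b, rfl, hx⟩ :=
    exists_dotProduct_lamination_mulVec_eq_convexComb (θ := θ) (e := e) hA.isHermitian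
      hB.isHermitian x
  rw [star_trivial, sub_mulVec, dotProduct_sub, sub_nonneg, hx]
  exact hA.dotProduct_harmonicMean_mulVec_le hB hθ a b

end Lamination

theorem lamination_bounds_general {n : ℕ} (μ₀ μ₁ : ℝ) (hμ₀ : 0 < μ₀)
    (A B : Matrix (Fin n) (Fin n) ℝ) (hA : A.PosDef) (hB : B.PosDef)
    (hAl : (A - μ₀ • (1 : Matrix (Fin n) (Fin n) ℝ)).PosSemidef)
    (hAu : (μ₁ • (1 : Matrix (Fin n) (Fin n) ℝ) - A).PosSemidef)
    (hBl : (B - μ₀ • (1 : Matrix (Fin n) (Fin n) ℝ)).PosSemidef)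
    (hBu : (μ₁ • (1 : Matrix (Fin n) (Fin n) ℝ) - B).PosSemidef)
    (θ : ℝ) (hθ : θ ∈ Set.Icc (0:ℝ) 1) (e : Fin n → ℝ) :
    (lamination A B θ e).IsSymm ∧
    (lamination A B θ e - ((1 - θ) • A⁻¹ + θ • B⁻¹)⁻¹).PosSemidef ∧
    ((1 - θ) • A + θ • B - lamination A B θ e).PosSemidef ∧
    (lamination A B θ e - μ₀ • (1 : Matrix (Fin n) (Fin n) ℝ)).PosSemidef ∧
    (μ₁ • (1 : Matrix (Fin n) (Fin n) ℝ) - lamination A B θ e).PosSemidef := by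
  have hupper := sub_lamination_posSemidef (e := e) hA.posSemidef hB.posSemidef hθ
  have hsplit : μ₁ • (1 : Matrix (Fin n) (Fin n) ℝ) - lamination A B θ e =
      (1 - θ) • (μ₁ • 1 - A) + θ • (μ₁ • 1 - B) + ((1 - θ) • A + θ • B - lamination A B θ e) := by
    module
  refine ⟨isHermitian_iff_isSymm.mp (isHermitian_lamination hA.isHermitian hB.isHermitian),
    lamination_sub_harmonicMean_posSemidef hA hB hθ, hupper,
    lamination_sub_posSemidef_of_le (PosSemidef.one.smul hμ₀.le) hAl hBl hθ, ?_⟩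
  rw [hsplit]
  exact ((hAu.smul (sub_nonneg.mpr hθ.2)).add (hBu.smul hθ.1)).add hupper

/-- The lamination `H[A,B;θ,e]` is a symmetric matrix satisfying
`((1−θ)A⁻¹+θB⁻¹)⁻¹ ≤ H[A,B;θ,e] ≤ (1−θ)A+θB`; in particular, if `μ₀I ≤ A,B ≤ μ₁I`
then `μ₀I ≤ H[A,B;θ,e] ≤ μ₁I`. -/
theorem lamination_bounds {n : ℕ} (μ₀ μ₁ : ℝ) (hμ₀ : 0 < μ₀) (hμ : μ₀ ≤ μ₁)
    (A B : Matrix (Fin n) (Fin n) ℝ) (hA : A.PosDef) (hB : B.PosDef)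
    (hAl : (A - μ₀ • (1 : Matrix (Fin n) (Fin n) ℝ)).PosSemidef)
    (hAu : (μ₁ • (1 : Matrix (Fin n) (Fin n) ℝ) - A).PosSemidef)
    (hBl : (B - μ₀ • (1 : Matrix (Fin n) (Fin n) ℝ)).PosSemidef)
    (hBu : (μ₁ • (1 : Matrix (Fin n) (Fin n) ℝ) - B).PosSemidef)
    (θ : ℝ) (hθ : θ ∈ Set.Icc (0:ℝ) 1) (e : Fin n → ℝ) (he : e ⬝ᵥ e = 1) :
    (lamination A B θ e).IsSymm ∧
    (lamination A B θ e - ((1 - θ) • A⁻¹ + θ • B⁻¹)⁻¹).PosSemidef ∧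
    ((1 - θ) • A + θ • B - lamination A B θ e).PosSemidef ∧
    (lamination A B θ e - μ₀ • (1 : Matrix (Fin n) (Fin n) ℝ)).PosSemidef ∧
    (μ₁ • (1 : Matrix (Fin n) (Fin n) ℝ) - lamination A B θ e).PosSemidef :=
  lamination_bounds_general μ₀ μ₁ hμ₀ A B hA hB hAl hAu hBl hBu θ hθ e
end

section
/- If Ā and B̄ are symmetric positive definite matrices and ξ ∈ ℝⁿ satisfy ⟨Āξ,ξ⟩ ≥ ⟨B̄^{-1}Āξ, Āξ⟩ and ⟨B̄ξ,ξ⟩ ≥ ⟨Ā^{-1}B̄ξ, B̄ξ⟩, then Āξ = B̄ξ. -/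
/-!
Put `a = Āξ` and `b = B̄ξ`. Expanding the quadratic forms of the inverses,
`⟨B̄⁻¹(a - b), a - b⟩ + ⟨Ā⁻¹(b - a), b - a⟩` is the sum of the slacks in the two hypotheses,
hence `≤ 0`. Both forms are positive definite, so `a - b = 0`.
-/

open Matrix

variable {ι : Type*} [Fintype ι]

theorem Matrix.IsHermitian.inv_mulVec_sub_mulVec_dotProduct [DecidableEq ι] {B : Matrix ι ι ℝ}
    (hB : B.IsHermitian) (hdet : IsUnit B.det) (ξ a : ι → ℝ) :
    B⁻¹ *ᵥ (a - B *ᵥ ξ) ⬝ᵥ (a - B *ᵥ ξ) = B⁻¹ *ᵥ a ⬝ᵥ a - 2 * (a ⬝ᵥ ξ) + B *ᵥ ξ ⬝ᵥ ξ := by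
  have hinv : B⁻¹ *ᵥ (B *ᵥ ξ) = ξ := by
    rw [mulVec_mulVec, nonsing_inv_mul _ hdet, one_mulVec]
  have hinvT : B⁻¹ᵀ = B⁻¹ := by
    simpa only [conjTranspose_eq_transpose_of_trivial] using hB.inv.eq
  have hcross : B⁻¹ *ᵥ a ⬝ᵥ B *ᵥ ξ = a ⬝ᵥ ξ := by
    rw [← hinvT, mulVec_transpose, ← dotProduct_mulVec, hinv]
  rw [mulVec_sub, hinv, sub_dotProduct, dotProduct_sub, dotProduct_sub, hcross,
    dotProduct_comm ξ a, dotProduct_comm ξ (B *ᵥ ξ)]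
  ring

theorem Matrix.PosDef.eq_zero_of_dotProduct_mulVec_nonpos {M : Matrix ι ι ℝ} (hM : M.PosDef)
    {x : ι → ℝ} (hx : M *ᵥ x ⬝ᵥ x ≤ 0) : x = 0 := by
  by_contra hne
  have hpos := hM.dotProduct_mulVec_pos hne
  rw [star_trivial, dotProduct_comm] at hpos
  linarith

/-- Proposition 5.1(ii): if both `Ā` and `B̄` (symmetric positive definite) satisfy the
pointwise variational inequalities `⟨Āξ,ξ⟩ ≥ ⟨B̄⁻¹Āξ,Āξ⟩` and `⟨B̄ξ,ξ⟩ ≥ ⟨Ā⁻¹B̄ξ,B̄ξ⟩`,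
then `Āξ = B̄ξ`. -/
theorem var_ineq_unique_image {n : ℕ} (Abar Bbar : Matrix (Fin n) (Fin n) ℝ)
    (hA : Abar.PosDef) (hB : Bbar.PosDef) (ξ : Fin n → ℝ)
    (h1 : Bbar⁻¹.mulVec (Abar.mulVec ξ) ⬝ᵥ Abar.mulVec ξ ≤ Abar.mulVec ξ ⬝ᵥ ξ)
    (h2 : Abar⁻¹.mulVec (Bbar.mulVec ξ) ⬝ᵥ Bbar.mulVec ξ ≤ Bbar.mulVec ξ ⬝ᵥ ξ) :
    Abar.mulVec ξ = Bbar.mulVec ξ := by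
  have hAB := hB.isHermitian.inv_mulVec_sub_mulVec_dotProduct hB.det_pos.ne'.isUnit ξ (Abar *ᵥ ξ)
  have hBA := hA.isHermitian.inv_mulVec_sub_mulVec_dotProduct hA.det_pos.ne'.isUnit ξ (Bbar *ᵥ ξ)
  have hBA_nonneg := hA.inv.posSemidef.dotProduct_mulVec_nonneg (Bbar *ᵥ ξ - Abar *ᵥ ξ)
  rw [star_trivial, dotProduct_comm] at hBA_nonneg
  rw [← sub_eq_zero]
  exact hB.inv.eq_zero_of_dotProduct_mulVec_nonpos (by linarith)
end

section
/- Define F : ℝ² → ℝ² piecewise by F(0)=0, F(ξ)=A₀ξ on E_{A₀}, F(ξ)=ξ on E_I, F(ξ)=G₊ξ on E₊, F(ξ)=G₋ξ on E₋ (with A₀ = diag(μ₀,μ₁), G_± the rank-one projections onto (±√(1−s),√s), s=(1−μ₀)μ₁/(μ₁−μ₀), and E_{A₀}, E_I, E_± the regions of (5.8)). Then μ₀|ξ|² ≤ ⟨F(ξ),ξ⟩ ≤ μ₁|ξ|² for all ξ ∈ ℝ². -/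
open Matrix

open Classical in
/-- The piecewise feedback map `F` of Section 5: `F(0)=0`, `F(ξ)=A₀ξ` on `E_{A₀}`,
`F(ξ)=ξ` on `E_I`, `F(ξ)=G₊ξ` on `E₊` and `F(ξ)=G₋ξ` on `E₋`. -/
noncomputable def feedbackF (μ₀ μ₁ : ℝ) (ξ : Fin 2 → ℝ) : Fin 2 → ℝ :=
  let s : ℝ := (1 - μ₀) * μ₁ / (μ₁ - μ₀)
  if ξ = 0 then 0
  else if (ξ 1) ^ 2 ≤ (μ₀ * (1 - μ₀) / (μ₁ * (μ₁ - 1))) * (ξ 0) ^ 2 then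
    (!![μ₀, 0; 0, μ₁] : Matrix (Fin 2) (Fin 2) ℝ).mulVec ξ
  else if (μ₁ * (1 - μ₀) / (μ₀ * (μ₁ - 1))) * (ξ 0) ^ 2 ≤ (ξ 1) ^ 2 then ξ
  else if 0 < ξ 0 * ξ 1 then
    (!![1 - s, Real.sqrt (s * (1 - s)); Real.sqrt (s * (1 - s)), s] :
      Matrix (Fin 2) (Fin 2) ℝ).mulVec ξ
  else
    (!![1 - s, -Real.sqrt (s * (1 - s)); -Real.sqrt (s * (1 - s)), s] :
      Matrix (Fin 2) (Fin 2) ℝ).mulVec ξ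

lemma aux_prod {μ₀ μ₁ m q x y : ℝ} (h0 : 0 < μ₀) (h1 : μ₀ < 1) (h2 : 1 < μ₁)
    (hx : 0 < x) (hy : 0 < y)
    (hm : m^2 = μ₀*(1-μ₀)) (hq : q^2 = μ₁*(μ₁-1)) (hm0 : 0 ≤ m) (hq0 : 0 ≤ q)
    (ha : m^2*x^2 < q^2*y^2) (hb : m*q*y < μ₁*(1-μ₀)*x) :
    (m*x - (q-(μ₁-μ₀))*y) * (m*x - (q+(μ₁-μ₀))*y) ≤ 0 := by
  have hmpos : 0 < m := lt_of_le_of_ne hm0 (by intro h; nlinarith)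
  have hqpos : 0 < q := lt_of_le_of_ne hq0 (by intro h; nlinarith)
  have hqμ : q < μ₁ := by nlinarith
  have f2 : m*x - (q+(μ₁-μ₀))*y ≤ 0 := by
    have h' : m*x < q*y := by
      have := lt_of_pow_lt_pow_left₀ 2 (by positivity : (0:ℝ) ≤ q*y) (by nlinarith : (m*x)^2 < (q*y)^2)
      linarith
    nlinarith
  have f1 : 0 ≤ m*x - (q-(μ₁-μ₀))*y := by
    rcases le_or_gt q (μ₁-μ₀) with h | h
    · nlinarith
    · have key : m*q*((q-(μ₁-μ₀))*y) < m*q*(m*x) := by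
        calc m*q*((q-(μ₁-μ₀))*y) = (q-(μ₁-μ₀))*(m*q*y) := by ring
          _ < (q-(μ₁-μ₀))*(μ₁*(1-μ₀)*x) := by
              exact mul_lt_mul_of_pos_left hb (by linarith)
          _ ≤ μ₀*(1-μ₀)*(q*x) := by
              nlinarith [mul_nonneg (mul_nonneg (by linarith : (0:ℝ) ≤ 1-μ₀) hx.le)
                (mul_nonneg (by linarith : (0:ℝ) ≤ μ₁-μ₀) (by linarith : (0:ℝ) ≤ μ₁-q))]
          _ = m*q*(m*x) := by linear_combination (-(q*x))*hm
      have := (mul_lt_mul_iff_right₀ (mul_pos hmpos hqpos)).mp key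
      linarith
  exact mul_nonpos_of_nonneg_of_nonpos f1 f2


set_option maxHeartbeats 1000000 in
lemma aux_lower {μ₀ μ₁ x y : ℝ} (h0 : 0 < μ₀) (h1 : μ₀ < 1) (h2 : 1 < μ₁)
    (ha : (μ₀ * (1 - μ₀) / (μ₁ * (μ₁ - 1))) * x ^ 2 < y ^ 2)
    (hb : y ^ 2 < (μ₁ * (1 - μ₀) / (μ₀ * (μ₁ - 1))) * x ^ 2)
    (hxy : 0 < x * y) :
    μ₀ * (x^2 + y^2) ≤
      (1 - (1 - μ₀) * μ₁ / (μ₁ - μ₀)) * x^2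
      + 2 * Real.sqrt (((1 - μ₀) * μ₁ / (μ₁ - μ₀)) * (1 - (1 - μ₀) * μ₁ / (μ₁ - μ₀))) * x * y
      + ((1 - μ₀) * μ₁ / (μ₁ - μ₀)) * y^2 := by
  have hΔ : (0:ℝ) < μ₁ - μ₀ := by linarith
  set s : ℝ := (1 - μ₀) * μ₁ / (μ₁ - μ₀) with hs
  have hs0 : 0 < s := by
    rw [hs]; exact div_pos (by nlinarith) hΔ
  have hs1 : s < 1 := by
    rw [hs, div_lt_one hΔ]; nlinarith
  set c : ℝ := Real.sqrt (s * (1 - s)) with hcdef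
  have hc : c^2 = s * (1 - s) := Real.sq_sqrt (by nlinarith)
  have hc0 : 0 ≤ c := Real.sqrt_nonneg _
  have hΔs : (μ₁ - μ₀) * s = (1 - μ₀) * μ₁ := by
    rw [hs]; field_simp
  clear_value c
  clear_value s
  obtain ⟨m, hm0, hm⟩ : ∃ m : ℝ, 0 ≤ m ∧ m^2 = μ₀*(1-μ₀) :=
    ⟨Real.sqrt _, Real.sqrt_nonneg _, Real.sq_sqrt (by nlinarith)⟩
  obtain ⟨q, hq0, hq⟩ : ∃ q : ℝ, 0 ≤ q ∧ q^2 = μ₁*(μ₁-1) :=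
    ⟨Real.sqrt _, Real.sqrt_nonneg _, Real.sq_sqrt (by nlinarith)⟩
  have hΔc : (μ₁ - μ₀) * c = m * q := by
    have e1 : ((μ₁ - μ₀) * c)^2 = (m * q)^2 := by
      rw [mul_pow, mul_pow, hc, hm, hq]
      linear_combination ((μ₁-μ₀) - (μ₁-μ₀)*s - (1-μ₀)*μ₁) * hΔs
    have h1' : 0 ≤ (μ₁ - μ₀) * c := mul_nonneg hΔ.le hc0
    have h2' : 0 ≤ m * q := mul_nonneg hm0 hq0
    nlinarith [e1, sq_nonneg ((μ₁ - μ₀) * c - m * q), sq_nonneg ((μ₁ - μ₀) * c + m * q)]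
  have ha' : m^2 * x^2 < q^2 * y^2 := by
    rw [hm, hq]
    have hd : (0:ℝ) < μ₁ * (μ₁ - 1) := by nlinarith
    rw [div_mul_eq_mul_div, div_lt_iff₀ hd] at ha
    linarith [ha]
  have hb' : (μ₀ * (μ₁ - 1)) * y^2 < (μ₁ * (1 - μ₀)) * x^2 := by
    have hd : (0:ℝ) < μ₀ * (μ₁ - 1) := by nlinarith
    rw [div_mul_eq_mul_div, lt_div_iff₀ hd] at hb
    linarith [hb]
  have hbq : ∀ X Y : ℝ, 0 < X → 0 < Y → μ₀*(μ₁-1)*Y^2 < μ₁*(1-μ₀)*X^2 →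
      m*q*Y < μ₁*(1-μ₀)*X := by
    intro X Y hX hY hBB
    have e : (m*q*Y)^2 = ((1-μ₀)*μ₁)*(μ₀*(μ₁-1)*Y^2) := by
      rw [mul_pow, mul_pow, hm, hq]; ring
    have h2sq : (m*q*Y)^2 < (μ₁*(1-μ₀)*X)^2 := by
      rw [e]
      calc ((1-μ₀)*μ₁)*(μ₀*(μ₁-1)*Y^2) < ((1-μ₀)*μ₁)*(μ₁*(1-μ₀)*X^2) :=
            mul_lt_mul_of_pos_left hBB (by nlinarith)
        _ = (μ₁*(1-μ₀)*X)^2 := by ring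
    exact lt_of_pow_lt_pow_left₀ 2
      (le_of_lt (mul_pos (mul_pos (by linarith) (by linarith : (0:ℝ) < 1-μ₀)) hX)) h2sq
  have key : (μ₁ - μ₀) * ((1 - s)*x^2 + 2*c*x*y + s*y^2 - μ₀*(x^2+y^2)) =
      -((m*x - (q-(μ₁-μ₀))*y) * (m*x - (q+(μ₁-μ₀))*y)) := by
    linear_combination (y^2 - x^2) * hΔs + (2*x*y) * hΔc + x^2 * hm + y^2 * hq
  have hx0 : x ≠ 0 := by rintro rfl; simp at hxy
  have hprod : (m*x - (q-(μ₁-μ₀))*y) * (m*x - (q+(μ₁-μ₀))*y) ≤ 0 := by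
    rcases hx0.lt_or_gt with hx | hx
    · have hy : y < 0 := by nlinarith
      have := aux_prod h0 h1 h2 (by linarith : (0:ℝ) < -x) (by linarith : (0:ℝ) < -y)
        hm hq hm0 hq0
        (by have e1 : (-x)^2 = x^2 := by ring
            have e2 : (-y)^2 = y^2 := by ring
            rw [e1, e2]; exact ha')
        (hbq (-x) (-y) (by linarith) (by linarith)
          (by have e1 : (-x)^2 = x^2 := by ring
              have e2 : (-y)^2 = y^2 := by ring
              rw [e1, e2]; exact hb'))
      have e : (m*(-x) - (q-(μ₁-μ₀))*(-y)) * (m*(-x) - (q+(μ₁-μ₀))*(-y)) =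
          (m*x - (q-(μ₁-μ₀))*y) * (m*x - (q+(μ₁-μ₀))*y) := by ring
      linarith [this, e]
    · have hy : 0 < y := by nlinarith
      exact aux_prod h0 h1 h2 hx hy hm hq hm0 hq0 ha'
        (hbq x y hx hy hb')
  have h5 : 0 ≤ (μ₁-μ₀) * ((1 - s)*x^2 + 2*c*x*y + s*y^2 - μ₀*(x^2+y^2)) := by
    rw [key]; linarith [hprod]
  have h6 := (mul_nonneg_iff_of_pos_left hΔ).mp h5
  linarith [h6]

lemma aux_upper {s x y : ℝ} (hs0 : 0 ≤ s) (hs1 : s ≤ 1) :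
    (1 - s)*x^2 + 2*Real.sqrt (s*(1-s))*x*y + s*y^2 ≤ x^2 + y^2 := by
  have h1 : Real.sqrt (s*(1-s)) = Real.sqrt s * Real.sqrt (1-s) := Real.sqrt_mul hs0 _
  have h2 : (Real.sqrt s)^2 = s := Real.sq_sqrt hs0
  have h3 : (Real.sqrt (1-s))^2 = 1-s := Real.sq_sqrt (by linarith)
  rw [h1]
  nlinarith [sq_nonneg (Real.sqrt s * x - Real.sqrt (1-s) * y)]

set_option maxHeartbeats 1000000 in
/-- The ellipticity bounds `μ₀|ξ|² ≤ ⟨F(ξ),ξ⟩ ≤ μ₁|ξ|²` for the piecewise map `F`. -/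
theorem feedbackF_elliptic_bounds (μ₀ μ₁ : ℝ) (h0 : 0 < μ₀) (h1 : μ₀ < 1) (h2 : 1 < μ₁)
    (ξ : Fin 2 → ℝ) :
    μ₀ * (ξ ⬝ᵥ ξ) ≤ feedbackF μ₀ μ₁ ξ ⬝ᵥ ξ ∧
    feedbackF μ₀ μ₁ ξ ⬝ᵥ ξ ≤ μ₁ * (ξ ⬝ᵥ ξ) := by
  have hΔ : (0:ℝ) < μ₁ - μ₀ := by linarith
  set x := ξ 0 with hx
  set y := ξ 1 with hy
  have hdot : ξ ⬝ᵥ ξ = x^2 + y^2 := by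
    simp [dotProduct, Fin.sum_univ_two]; ring
  unfold feedbackF
  split_ifs with hz hA hI hP
  · subst hz; norm_num [dotProduct]
  · rw [hdot]
    have hdF : ((!![μ₀, 0; 0, μ₁] : Matrix (Fin 2) (Fin 2) ℝ).mulVec ξ) ⬝ᵥ ξ
        = μ₀*x^2 + μ₁*y^2 := by
      simp [dotProduct, mulVec, Fin.sum_univ_two]; ring
    rw [hdF]
    constructor <;> nlinarith [sq_nonneg x, sq_nonneg y]
  · rw [hdot]
    constructor <;> nlinarith [sq_nonneg x, sq_nonneg y]
  · rw [hdot]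
    push_neg at hA hI
    rw [← hx, ← hy] at hA hI hP
    have hdF : ((!![1 - (1 - μ₀) * μ₁ / (μ₁ - μ₀),
          Real.sqrt ((1 - μ₀) * μ₁ / (μ₁ - μ₀) * (1 - (1 - μ₀) * μ₁ / (μ₁ - μ₀)));
          Real.sqrt ((1 - μ₀) * μ₁ / (μ₁ - μ₀) * (1 - (1 - μ₀) * μ₁ / (μ₁ - μ₀))),
          (1 - μ₀) * μ₁ / (μ₁ - μ₀)] : Matrix (Fin 2) (Fin 2) ℝ).mulVec ξ) ⬝ᵥ ξ
        = (1 - (1 - μ₀) * μ₁ / (μ₁ - μ₀)) * x^2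
          + 2 * Real.sqrt (((1 - μ₀) * μ₁ / (μ₁ - μ₀)) * (1 - (1 - μ₀) * μ₁ / (μ₁ - μ₀))) * x * y
          + ((1 - μ₀) * μ₁ / (μ₁ - μ₀)) * y^2 := by
      simp [dotProduct, mulVec, Fin.sum_univ_two]; ring
    rw [hdF]
    have hs0 : 0 < (1 - μ₀) * μ₁ / (μ₁ - μ₀) := div_pos (by nlinarith) hΔ
    have hs1 : (1 - μ₀) * μ₁ / (μ₁ - μ₀) < 1 := by
      rw [div_lt_one hΔ]; nlinarith
    constructor
    · exact aux_lower h0 h1 h2 hA hI hP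
    · have := aux_upper (s := (1 - μ₀) * μ₁ / (μ₁ - μ₀)) (x := x) (y := y) hs0.le hs1.le
      nlinarith [this, sq_nonneg x, sq_nonneg y]
  · rw [hdot]
    push_neg at hA hI hP
    rw [← hx, ← hy] at hA hI hP
    have hxne : x ≠ 0 := by
      rintro h
      rw [h] at hI
      nlinarith [sq_nonneg y, hI]
    have hyne : y ≠ 0 := by
      rintro h
      rw [h] at hA
      have hapos : 0 < μ₀ * (1 - μ₀) / (μ₁ * (μ₁ - 1)) := by
        apply div_pos <;> nlinarith
      nlinarith [sq_nonneg x, hA]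
    have hxy : 0 < x * (-y) := by
      rcases lt_or_gt_of_ne (mul_ne_zero hxne hyne : x * y ≠ 0) with h | h
      · linarith
      · linarith [hP]
    have hdF : ((!![1 - (1 - μ₀) * μ₁ / (μ₁ - μ₀),
          -Real.sqrt ((1 - μ₀) * μ₁ / (μ₁ - μ₀) * (1 - (1 - μ₀) * μ₁ / (μ₁ - μ₀)));
          -Real.sqrt ((1 - μ₀) * μ₁ / (μ₁ - μ₀) * (1 - (1 - μ₀) * μ₁ / (μ₁ - μ₀))),
          (1 - μ₀) * μ₁ / (μ₁ - μ₀)] : Matrix (Fin 2) (Fin 2) ℝ).mulVec ξ) ⬝ᵥ ξ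
        = (1 - (1 - μ₀) * μ₁ / (μ₁ - μ₀)) * x^2
          + 2 * Real.sqrt (((1 - μ₀) * μ₁ / (μ₁ - μ₀)) * (1 - (1 - μ₀) * μ₁ / (μ₁ - μ₀))) * x * (-y)
          + ((1 - μ₀) * μ₁ / (μ₁ - μ₀)) * (-y)^2 := by
      simp [dotProduct, mulVec, Fin.sum_univ_two]; ring
    rw [hdF]
    have hs0 : 0 < (1 - μ₀) * μ₁ / (μ₁ - μ₀) := div_pos (by nlinarith) hΔ
    have hs1 : (1 - μ₀) * μ₁ / (μ₁ - μ₀) < 1 := by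
      rw [div_lt_one hΔ]; nlinarith
    have hA' : (μ₀ * (1 - μ₀) / (μ₁ * (μ₁ - 1))) * x ^ 2 < (-y) ^ 2 := by
      rw [neg_pow]; simpa using hA
    have hI' : (-y) ^ 2 < (μ₁ * (1 - μ₀) / (μ₀ * (μ₁ - 1))) * x ^ 2 := by
      rw [neg_pow]; simpa using hI
    constructor
    · have := aux_lower h0 h1 h2 hA' hI' hxy
      nlinarith [this]
    · have := aux_upper (s := (1 - μ₀) * μ₁ / (μ₁ - μ₀)) (x := x) (y := -y) hs0.le hs1.le
      nlinarith [this, sq_nonneg x, sq_nonneg y]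
end

section
/- Let A₀ = diag(μ₀,μ₁) with 0 < μ₀ < 1 < μ₁, s = (1−μ₀)μ₁/(μ₁−μ₀), G = ηη^T with η = (ε√(1−s), √s)ᵀ, ε = ±1, and γ ∈ (0,1). Define Q = (A₀−I)^{-1} + γ(I−G) and Ā = I + (1−γ)Q^{-1}. If ξ = C(ε((1−γ)/μ₀ + γ)√(1−s), ((1−γ)/μ₁ + γ)√s)ᵀ for some C ≠ 0, then Q is invertible and Āξ = Gξ. -/
open Matrix

set_option maxHeartbeats 1000000 in

/-- Equation (5.20): with `A₀ = diag(μ₀,μ₁)`, `s = (1−μ₀)μ₁/(μ₁−μ₀)`, `η = (ε√(1−s),√s)ᵀ`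
(`ε = ±1`), `G = ηηᵀ`, `γ ∈ (0,1)`, `Q = (A₀−I)⁻¹ + γ(I−G)` and `Ā = I + (1−γ)Q⁻¹`:
for any `ξ = C(ε((1−γ)/μ₀+γ)√(1−s), ((1−γ)/μ₁+γ)√s)ᵀ` with `C ≠ 0`, the matrix `Q` is
invertible and `Āξ = Gξ`. -/
theorem lamination_solution_formula (μ₀ μ₁ : ℝ) (h0 : 0 < μ₀) (h1 : μ₀ < 1) (h2 : 1 < μ₁)
    (ε : ℝ) (hε : ε = 1 ∨ ε = -1) (γ : ℝ) (hγ : γ ∈ Set.Ioo (0:ℝ) 1)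
    (C : ℝ) (hC : C ≠ 0) :
    let s : ℝ := (1 - μ₀) * μ₁ / (μ₁ - μ₀)
    let η : Fin 2 → ℝ := ![ε * Real.sqrt (1 - s), Real.sqrt s]
    let G : Matrix (Fin 2) (Fin 2) ℝ := vecMulVec η η
    let A₀ : Matrix (Fin 2) (Fin 2) ℝ := !![μ₀, 0; 0, μ₁]
    let Q : Matrix (Fin 2) (Fin 2) ℝ :=
      (A₀ - 1)⁻¹ + γ • ((1 : Matrix (Fin 2) (Fin 2) ℝ) - G)
    let Abar : Matrix (Fin 2) (Fin 2) ℝ := 1 + (1 - γ) • Q⁻¹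
    let ξ : Fin 2 → ℝ :=
      C • ![ε * ((1 - γ) / μ₀ + γ) * Real.sqrt (1 - s),
            ((1 - γ) / μ₁ + γ) * Real.sqrt s]
    IsUnit Q ∧ Abar.mulVec ξ = G.mulVec ξ := by
  intro s η G A₀ Q Abar ξ
  have hd0 : μ₀ - 1 ≠ 0 := by linarith
  have hd1 : μ₁ - 1 ≠ 0 := by linarith
  have hdd : μ₁ - μ₀ ≠ 0 := by linarith
  have hm0 : μ₀ ≠ 0 := ne_of_gt h0
  have hm1 : μ₁ ≠ 0 := by positivity
  set a : ℝ := Real.sqrt (1 - s) with ha_def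
  set b : ℝ := Real.sqrt s with hb_def
  have hs1 : 1 - s = μ₀ * (μ₁ - 1) / (μ₁ - μ₀) := by
    show 1 - (1 - μ₀) * μ₁ / (μ₁ - μ₀) = _
    field_simp; ring
  have hs0 : (0:ℝ) ≤ s :=
    le_of_lt (div_pos (mul_pos (by linarith) (by linarith)) (by linarith))
  have hs1' : (0:ℝ) ≤ 1 - s := by
    rw [hs1]
    exact le_of_lt (div_pos (mul_pos h0 (by linarith)) (by linarith))
  have ha2 : a ^ 2 = 1 - s := Real.sq_sqrt hs1'
  have hb2 : b ^ 2 = s := Real.sq_sqrt hs0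
  have he2 : ε ^ 2 = 1 := by rcases hε with h | h <;> rw [h] <;> norm_num
  -- inverse of A₀ - 1
  have hBinv : (A₀ - (1:Matrix (Fin 2) (Fin 2) ℝ))⁻¹ = !![(μ₀-1)⁻¹, 0; 0, (μ₁-1)⁻¹] := by
    apply Matrix.inv_eq_left_inv
    show !![(μ₀-1)⁻¹, 0; 0, (μ₁-1)⁻¹] * (!![μ₀, 0; 0, μ₁] - 1) = 1
    have : (1 : Matrix (Fin 2) (Fin 2) ℝ) = !![1,0;0,1] := by
      ext i j; fin_cases i <;> fin_cases j <;> simp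
    rw [this]
    ext i j; fin_cases i <;> fin_cases j <;>
      simp [Matrix.mul_apply, Fin.sum_univ_two] <;> field_simp
  have hQm : Q = !![(μ₀-1)⁻¹ + γ*(1 - ε*a*(ε*a)), -(γ*(ε*a*b)); -(γ*(b*(ε*a))), (μ₁-1)⁻¹ + γ*(1-b*b)] := by
    show (A₀ - 1)⁻¹ + γ • ((1 : Matrix (Fin 2) (Fin 2) ℝ) - G) = _
    rw [hBinv]
    ext i j; fin_cases i <;> fin_cases j <;>
      simp [G, η, vecMulVec_apply, Matrix.one_apply, ← ha_def, ← hb_def] <;> ring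
  have hdet : Q.det = (1 + γ*(μ₀*μ₁-1))/((μ₀-1)*(μ₁-1)) := by
    rw [hQm, Matrix.det_fin_two_of]
    have hb2' : b*b = s := by linear_combination hb2
    have h1 : ε*a*(ε*a) = 1 - s := by linear_combination a^2*he2 + ha2
    rw [hb2', h1]
    have : -(γ*(ε*a*b)) * -(γ*(b*(ε*a))) = γ^2*((1-s)*s) := by
      linear_combination γ^2*a^2*b^2*he2 + γ^2*b^2*ha2 + γ^2*(1-s)*hb2
    rw [this]
    show ((μ₀-1)⁻¹ + γ*(1-(1-(1-μ₀)*μ₁/(μ₁-μ₀)))) * ((μ₁-1)⁻¹ + γ*(1-(1-μ₀)*μ₁/(μ₁-μ₀))) - γ^2*((1-(1-μ₀)*μ₁/(μ₁-μ₀))*((1-μ₀)*μ₁/(μ₁-μ₀))) = _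
    field_simp
    ring
  have hdet0 : Q.det ≠ 0 := by
    rw [hdet]
    have hnum : 0 < 1 + γ*(μ₀*μ₁-1) := by nlinarith [hγ.1, hγ.2, mul_pos h0 (show (0:ℝ) < μ₁ by linarith)]
    have hden : (μ₀-1)*(μ₁-1) ≠ 0 := mul_ne_zero hd0 hd1
    exact div_ne_zero (ne_of_gt hnum) hden
  have hQunit : IsUnit Q := (Matrix.isUnit_iff_isUnit_det _).2 (isUnit_iff_ne_zero.2 hdet0)
  refine ⟨hQunit, ?_⟩
  have ha2' : a^2 = μ₀*(μ₁-1)/(μ₁-μ₀) := by rw [ha2, hs1]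
  have hb2' : b^2 = (1-μ₀)*μ₁/(μ₁-μ₀) := hb2
  have HU : (ε*a)^2 = μ₀*(μ₁-1)/(μ₁-μ₀) := by linear_combination a^2*he2 + ha2'
  have hGm : G = !![ε*a*(ε*a), ε*a*b; b*(ε*a), b*b] := by
    ext i j; fin_cases i <;> fin_cases j <;> simp [G, η, vecMulVec_apply, ← ha_def, ← hb_def]
  have hxi : ξ = ![C*(ε*((1-γ)/μ₀+γ)*a), C*(((1-γ)/μ₁+γ)*b)] := by
    ext i; fin_cases i <;> simp [ξ, ← ha_def, ← hb_def] <;> ring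
  have hs_def : s = (1 - μ₀) * μ₁ / (μ₁ - μ₀) := rfl
  clear_value a b s
  have HU1 : (ε*a)^2 = 1 - s := by linear_combination a^2*he2 + ha2
  have hw : G.mulVec ξ - ξ = (C*(((1-γ)/μ₀+γ) - ((1-γ)/μ₁+γ))) • ![-(s*(ε*a)), (1-s)*b] := by
    rw [hGm, hxi]
    ext i; fin_cases i
    · simp only [Matrix.mulVec, dotProduct, Fin.sum_univ_two, Fin.isValue,
        Matrix.cons_val', Matrix.cons_val_zero, Matrix.cons_val_one, Matrix.head_cons,
        Matrix.empty_val', Matrix.cons_val_fin_one, Matrix.head_fin_const,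
        Pi.sub_apply, Pi.smul_apply, smul_eq_mul, Fin.zero_eta, Fin.mk_one, Matrix.of_apply, Matrix.cons_val_zero, Matrix.head_cons]
      linear_combination (C*(ε*a)*((1-γ)/μ₀+γ))*HU1 + (C*(ε*a)*((1-γ)/μ₁+γ))*hb2
    · simp only [Matrix.mulVec, dotProduct, Fin.sum_univ_two, Fin.isValue,
        Matrix.cons_val', Matrix.cons_val_zero, Matrix.cons_val_one, Matrix.head_cons,
        Matrix.empty_val', Matrix.cons_val_fin_one, Matrix.head_fin_const,
        Pi.sub_apply, Pi.smul_apply, smul_eq_mul, Fin.zero_eta, Fin.mk_one, Matrix.of_apply, Matrix.cons_val_zero, Matrix.head_cons]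
      linear_combination (C*b*((1-γ)/μ₀+γ))*HU1 + (C*b*((1-γ)/μ₁+γ))*hb2
  have hQw : Q.mulVec ((C*(((1-γ)/μ₀+γ) - ((1-γ)/μ₁+γ))) • ![-(s*(ε*a)), (1-s)*b])
      = (C*(((1-γ)/μ₀+γ) - ((1-γ)/μ₁+γ))) • ![(-(s*(ε*a)))*((μ₀-1)⁻¹+γ), ((1-s)*b)*((μ₁-1)⁻¹+γ)] := by
    rw [hQm]
    ext i; fin_cases i
    · simp only [Matrix.mulVec, dotProduct, Fin.sum_univ_two, Fin.isValue,
        Matrix.cons_val', Matrix.cons_val_zero, Matrix.cons_val_one, Matrix.head_cons,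
        Matrix.empty_val', Matrix.cons_val_fin_one, Matrix.head_fin_const,
        Pi.sub_apply, Pi.smul_apply, smul_eq_mul, Fin.zero_eta, Fin.mk_one, Matrix.of_apply, Matrix.cons_val_zero, Matrix.head_cons]
      linear_combination ((C*(((1-γ)/μ₀+γ) - ((1-γ)/μ₁+γ)))*s*γ*(ε*a))*HU1
        - ((C*(((1-γ)/μ₀+γ) - ((1-γ)/μ₁+γ)))*γ*(1-s)*(ε*a))*hb2
    · simp only [Matrix.mulVec, dotProduct, Fin.sum_univ_two, Fin.isValue,
        Matrix.cons_val', Matrix.cons_val_zero, Matrix.cons_val_one, Matrix.head_cons,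
        Matrix.empty_val', Matrix.cons_val_fin_one, Matrix.head_fin_const,
        Pi.sub_apply, Pi.smul_apply, smul_eq_mul, Fin.zero_eta, Fin.mk_one, Matrix.of_apply, Matrix.cons_val_zero, Matrix.head_cons]
      linear_combination ((C*(((1-γ)/μ₀+γ) - ((1-γ)/μ₁+γ)))*γ*s*b)*HU1
        - ((C*(((1-γ)/μ₀+γ) - ((1-γ)/μ₁+γ)))*γ*(1-s)*b)*hb2
  have hc0 : (((1-γ)/μ₀+γ) - ((1-γ)/μ₁+γ))*(-(s*((μ₀-1)⁻¹+γ))) = (1-γ)*((1-γ)/μ₀+γ) := by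
    rw [hs_def]
    field_simp
    ring
  have hc1 : (((1-γ)/μ₀+γ) - ((1-γ)/μ₁+γ))*((1-s)*((μ₁-1)⁻¹+γ)) = (1-γ)*((1-γ)/μ₁+γ) := by
    rw [hs1]
    field_simp
    ring
  have key : Q.mulVec (G.mulVec ξ - ξ) = (1 - γ) • ξ := by
    rw [hw, hQw, hxi]
    ext i; fin_cases i
    · simp only [Matrix.mulVec, dotProduct, Fin.sum_univ_two, Fin.isValue,
        Matrix.cons_val', Matrix.cons_val_zero, Matrix.cons_val_one, Matrix.head_cons,
        Matrix.empty_val', Matrix.cons_val_fin_one, Matrix.head_fin_const,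
        Pi.sub_apply, Pi.smul_apply, smul_eq_mul, Fin.zero_eta, Fin.mk_one, Matrix.of_apply, Matrix.cons_val_zero, Matrix.head_cons]
      linear_combination (C*(ε*a))*hc0
    · simp only [Matrix.mulVec, dotProduct, Fin.sum_univ_two, Fin.isValue,
        Matrix.cons_val', Matrix.cons_val_zero, Matrix.cons_val_one, Matrix.head_cons,
        Matrix.empty_val', Matrix.cons_val_fin_one, Matrix.head_fin_const,
        Pi.sub_apply, Pi.smul_apply, smul_eq_mul, Fin.zero_eta, Fin.mk_one, Matrix.of_apply, Matrix.cons_val_zero, Matrix.head_cons]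
      linear_combination (C*b)*hc1
  have hQinv : Q⁻¹ * Q = 1 := Matrix.nonsing_inv_mul Q (isUnit_iff_ne_zero.2 hdet0)
  have h5 : (1 - γ) • Q⁻¹.mulVec ξ = G.mulVec ξ - ξ := by
    rw [← Matrix.mulVec_smul, ← key, Matrix.mulVec_mulVec, hQinv, Matrix.one_mulVec]
  show (1 + (1-γ) • Q⁻¹).mulVec ξ = G.mulVec ξ
  rw [Matrix.add_mulVec, Matrix.one_mulVec, Matrix.smul_mulVec, h5]
  abel
end
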